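/- For all integers n ≥ 1 and d ≥ 2, l°_d(n) = max(1, n/2^d) · λ_d(B_d), where l°_d(n) is the supremum of volumes of disjoint unions of n open balls in ℝ^d whose intersection with every line has total length at most 1, and B_d is the d-dimensional ball of diameter 1. -/

import Mathlib

open Metric MeasureTheory

/-- every line meets `P` in a set of total length at most `1`. -/
def LineCondition {d : ℕ} (P : Set (EuclideanSpace ℝ (Fin d))) : Prop :=
  ∀ p v : EuclideanSpace ℝ (Fin d), ‖v‖ = 1 → volume {t : ℝ | p + t • v ∈ P} ≤ 1

/-- `P` is a disjoint union of `n` open balls. -/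
def IsBallUnion {d : ℕ} (n : ℕ) (P : Set (EuclideanSpace ℝ (Fin d))) : Prop :=
  ∃ c : Fin n → EuclideanSpace ℝ (Fin d), ∃ r : Fin n → ℝ, (∀ i, 0 < r i) ∧
    (Pairwise fun i j => Disjoint (ball (c i) (r i)) (ball (c j) (r j))) ∧
    P = ⋃ i, ball (c i) (r i)

/-- `l°_d(n)`: supremum of volumes of disjoint unions of `n` open balls whose
intersection with every line has total length at most `1`. -/
noncomputable def lCirc (d n : ℕ) : ENNReal :=
  sSup {μ | ∃ P : Set (EuclideanSpace ℝ (Fin d)),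
    IsBallUnion n P ∧ LineCondition P ∧ μ = volume P}

/-
A line meets a ball in a chord no longer than its diameter, and the line through two centres meets
both balls in full diameters. So the diameters `X i` satisfy `X i ≤ 1` and `X i + X j ≤ 1`, and
convexity of `x ↦ x ^ d` bounds `∑ X i ^ d` by `max 1 (n / 2 ^ d)`. The bound `1` is approached by
one ball of diameter almost `1` with `n - 1` tiny satellites whose diameters sum to less than the
rest. The bound `n / 2 ^ d` is attained by balls of diameter `1/2` centred at the vertices of a
regular `n`-gon so large that each vertex is at distance at least `1` from every chord between two
others: then no line meets three of the balls.
-/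

open Set Real Filter Topology RealInnerProductSpace

section Lines

variable {E : Type*} [NormedAddCommGroup E] [InnerProductSpace ℝ E]

lemma preimage_line_ball_eq {p v : E} (hv : ‖v‖ = 1) (s r : ℝ) :
    {t : ℝ | p + t • v ∈ ball (p + s • v) r} = ball s r := by
  ext t
  simp [dist_eq_norm, ← sub_smul, norm_smul, hv]

lemma preimage_line_ball_subset {p v : E} (hv : ‖v‖ = 1) (c : E) (r : ℝ) :
    {t : ℝ | p + t • v ∈ ball c r} ⊆ ball ⟪c - p, v⟫ r := by
  intro t ht
  have key : ⟪p + t • v - c, v⟫ = t - ⟪c - p, v⟫ := by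
    rw [inner_sub_left, inner_add_left, real_inner_smul_left, inner_sub_left,
      real_inner_self_eq_norm_sq, hv]
    ring
  rw [mem_ball, Real.dist_eq, ← key]
  refine (abs_real_inner_le_norm _ _).trans_lt ?_
  rwa [hv, mul_one, ← dist_eq_norm]

lemma volume_preimage_line_ball_le {p v : E} (hv : ‖v‖ = 1) (c : E) (r : ℝ) :
    volume {t : ℝ | p + t • v ∈ ball c r} ≤ ENNReal.ofReal (2 * r) :=
  (measure_mono (preimage_line_ball_subset hv c r)).trans_eq (Real.volume_ball _ _)

lemma exists_eq_add_smul_of_norm_eq_one [Nontrivial E] (x y : E) :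
    ∃ v : E, ‖v‖ = 1 ∧ ∃ s : ℝ, y = x + s • v := by
  by_cases hxy : x = y
  · obtain ⟨v, hv⟩ := exists_norm_eq E zero_le_one
    exact ⟨v, hv, 0, by simp [hxy]⟩
  · have hw : ‖y - x‖ ≠ 0 := norm_ne_zero_iff.2 (sub_ne_zero.2 (Ne.symm hxy))
    refine ⟨‖y - x‖⁻¹ • (y - x), ?_, ‖y - x‖, ?_⟩
    · rw [norm_smul, norm_inv, norm_norm, inv_mul_cancel₀ hw]
    · rw [smul_smul, mul_inv_cancel₀ hw, one_smul, add_sub_cancel]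

end Lines

lemma nontrivial_euclideanSpace {d : ℕ} (hd : d ≠ 0) : Nontrivial (EuclideanSpace ℝ (Fin d)) :=
  Module.nontrivial_of_finrank_pos (by rw [finrank_euclideanSpace_fin]; omega)


lemma sum_pow_le_max {ι : Type*} [Fintype ι] {d : ℕ} (hd : d ≠ 0) (X : ι → ℝ)
    (h0 : ∀ i, 0 ≤ X i) (h1 : ∀ i, X i ≤ 1) (hpair : ∀ i j, i ≠ j → X i + X j ≤ 1) :
    ∑ i, X i ^ d ≤ max 1 ((Fintype.card ι : ℝ) / 2 ^ d) := by
  classical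
  by_cases hsmall : ∀ i, X i ≤ 1 / 2
  · calc ∑ i, X i ^ d ≤ ∑ _i : ι, (1 / 2 : ℝ) ^ d :=
          Finset.sum_le_sum fun i _ => pow_le_pow_left₀ (h0 i) (hsmall i) d
      _ = Fintype.card ι / 2 ^ d := by simp [div_eq_mul_inv]
      _ ≤ _ := le_max_right _ _
  push Not at hsmall
  obtain ⟨i₀, hi₀⟩ := hsmall
  -- Write `X i₀ = (1 - t) / 2 + t` with `t ∈ [0, 1]`; convexity of `x ^ d` interpolates
  -- between the configurations `(1/2, 1/2, …)` and `(1, 0, …)`.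
  set t := 2 * X i₀ - 1 with ht
  have hconv : ∀ x y : ℝ, 0 ≤ x → 0 ≤ y →
      ((1 - t) * x + t * y) ^ d ≤ (1 - t) * x ^ d + t * y ^ d := fun x y hx hy =>
    by simpa [smul_eq_mul] using
      (convexOn_pow d).2 (mem_Ici.2 hx) (mem_Ici.2 hy) (by linarith [h1 i₀]) (by linarith) (by ring)
  have hbig : X i₀ ^ d ≤ (1 - t) * (1 / 2) ^ d + t := by
    have hcombo : (1 - t) * (1 / 2) + t * 1 = X i₀ := by rw [ht]; ring
    have := hconv (1 / 2) 1 (by norm_num) zero_le_one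
    rwa [hcombo, one_pow, mul_one] at this
  have hrest : ∀ j ∈ Finset.univ.erase i₀, X j ^ d ≤ (1 - t) * (1 / 2) ^ d := by
    intro j hj
    have hj : X j ≤ (1 - t) * (1 / 2) + t * 0 := by
      linarith [hpair j i₀ (Finset.ne_of_mem_erase hj)]
    simpa [zero_pow hd] using
      (pow_le_pow_left₀ (h0 j) hj d).trans (hconv (1 / 2) 0 (by norm_num) le_rfl)
  have : Nonempty ι := ⟨i₀⟩
  calc ∑ i, X i ^ d = X i₀ ^ d + ∑ j ∈ Finset.univ.erase i₀, X j ^ d :=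
        (Finset.add_sum_erase _ _ (Finset.mem_univ i₀)).symm
    _ ≤ (1 - t) * (1 / 2) ^ d + t + (Fintype.card ι - 1) * ((1 - t) * (1 / 2) ^ d) := by
        gcongr
        refine (Finset.sum_le_sum hrest).trans_eq ?_
        rw [Finset.sum_const, Finset.card_erase_of_mem (Finset.mem_univ _), nsmul_eq_mul,
          Finset.card_univ, Nat.cast_pred Fintype.card_pos]
    _ = (1 - t) * (Fintype.card ι / 2 ^ d) + t * 1 := by rw [one_div_pow]; ring
    _ ≤ max 1 ((Fintype.card ι : ℝ) / 2 ^ d) := by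
        have := h1 i₀
        nlinarith [le_max_left 1 ((Fintype.card ι : ℝ) / 2 ^ d),
          le_max_right 1 ((Fintype.card ι : ℝ) / 2 ^ d)]

section UpperBound

variable {d : ℕ} {ι : Type*} {c : ι → EuclideanSpace ℝ (Fin d)} {r : ι → ℝ}

lemma sum_two_mul_le_one_of_collinear
    (hdisj : Pairwise fun i j => Disjoint (ball (c i) (r i)) (ball (c j) (r j)))
    (hline : LineCondition (⋃ i, ball (c i) (r i))) (hr : ∀ i, 0 ≤ r i)
    {p v : EuclideanSpace ℝ (Fin d)} (hv : ‖v‖ = 1) (S : Finset ι)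
    (hS : ∀ i ∈ S, ∃ s : ℝ, c i = p + s • v) :
    ∑ i ∈ S, 2 * r i ≤ 1 := by
  choose! s hs using hS
  have hpre : ∀ i ∈ S, {t : ℝ | p + t • v ∈ ball (c i) (r i)} = ball (s i) (r i) := by
    intro i hi
    rw [hs i hi, preimage_line_ball_eq hv]
  have hsub : ⋃ i ∈ S, ball (s i) (r i) ⊆ {t : ℝ | p + t • v ∈ ⋃ i, ball (c i) (r i)} := by
    refine iUnion₂_subset fun i hi => ?_
    rw [← hpre i hi]
    exact fun t ht => mem_iUnion.2 ⟨i, ht⟩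
  have hdisjS : (S : Set ι).PairwiseDisjoint fun i => ball (s i) (r i) := by
    intro i hi j hj hij
    rw [Function.onFun, ← hpre i hi, ← hpre j hj]
    exact (hdisj hij).preimage _
  have hvol := (measure_mono hsub).trans (hline p v hv)
  rw [measure_biUnion_finset hdisjS fun _ _ => measurableSet_ball] at hvol
  simp only [Real.volume_ball] at hvol
  rwa [← ENNReal.ofReal_sum_of_nonneg fun i _ => by linarith [hr i], ENNReal.ofReal_le_one] at hvol

lemma two_mul_le_one (hd : d ≠ 0)
    (hdisj : Pairwise fun i j => Disjoint (ball (c i) (r i)) (ball (c j) (r j)))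
    (hline : LineCondition (⋃ i, ball (c i) (r i))) (hr : ∀ i, 0 ≤ r i) (i : ι) :
    2 * r i ≤ 1 := by
  have := nontrivial_euclideanSpace hd
  obtain ⟨v, hv⟩ := exists_norm_eq (EuclideanSpace ℝ (Fin d)) zero_le_one
  simpa using sum_two_mul_le_one_of_collinear hdisj hline hr (p := c i) hv {i} (by simp)

lemma two_mul_add_two_mul_le_one (hd : d ≠ 0)
    (hdisj : Pairwise fun i j => Disjoint (ball (c i) (r i)) (ball (c j) (r j)))
    (hline : LineCondition (⋃ i, ball (c i) (r i))) (hr : ∀ i, 0 ≤ r i) {i j : ι} (hij : i ≠ j) :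
    2 * r i + 2 * r j ≤ 1 := by
  classical
  have := nontrivial_euclideanSpace hd
  obtain ⟨v, hv, s, hs⟩ := exists_eq_add_smul_of_norm_eq_one (c i) (c j)
  have hsum := sum_two_mul_le_one_of_collinear hdisj hline hr (p := c i) hv {i, j} (by
    simp only [Finset.mem_insert, Finset.mem_singleton]
    rintro k (rfl | rfl)
    exacts [⟨0, by simp⟩, ⟨s, hs⟩])
  rwa [Finset.sum_pair hij] at hsum

lemma volume_iUnion_ball_eq_sum [Fintype ι] (hd : d ≠ 0)
    (hdisj : Pairwise fun i j => Disjoint (ball (c i) (r i)) (ball (c j) (r j)))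
    (hr : ∀ i, 0 ≤ r i) :
    volume (⋃ i, ball (c i) (r i)) =
      ENNReal.ofReal (∑ i, (2 * r i) ^ d) *
        volume (ball (0 : EuclideanSpace ℝ (Fin d)) (1 / 2)) := by
  have := nontrivial_euclideanSpace hd
  rw [measure_iUnion hdisj fun _ => measurableSet_ball, tsum_fintype,
    ENNReal.ofReal_sum_of_nonneg fun i _ => by have := hr i; positivity, Finset.sum_mul]
  refine Finset.sum_congr rfl fun i _ => ?_
  have := Measure.addHaar_ball_mul volume (c i) (by linarith [hr i] : 0 ≤ 2 * r i) (1 / 2)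
  rwa [finrank_euclideanSpace_fin, mul_one_div, mul_div_cancel_left₀ _ two_ne_zero] at this

end UpperBound

lemma volume_le_of_isBallUnion {n d : ℕ} (hd : d ≠ 0) {P : Set (EuclideanSpace ℝ (Fin d))}
    (hP : IsBallUnion n P) (hline : LineCondition P) :
    volume P ≤ ENNReal.ofReal (max 1 ((n : ℝ) / 2 ^ d)) *
      volume (ball (0 : EuclideanSpace ℝ (Fin d)) (1 / 2)) := by
  obtain ⟨c, r, hr, hdisj, rfl⟩ := hP
  have hr : ∀ i, 0 ≤ r i := fun i => (hr i).le
  rw [volume_iUnion_ball_eq_sum hd hdisj hr]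
  gcongr
  simpa using sum_pow_le_max hd (fun i => 2 * r i) (fun i => by linarith [hr i])
    (two_mul_le_one hd hdisj hline hr) fun i j => two_mul_add_two_mul_le_one hd hdisj hline hr

lemma le_lCirc {n d : ℕ} {P : Set (EuclideanSpace ℝ (Fin d))} (hP : IsBallUnion n P)
    (hline : LineCondition P) : volume P ≤ lCirc d n :=
  le_sSup ⟨P, hP, hline, rfl⟩

lemma lineCondition_of_sum_le {d : ℕ} {ι : Type*} [Fintype ι] (c : ι → EuclideanSpace ℝ (Fin d))
    {r : ι → ℝ} (hr : ∀ i, 0 ≤ r i) (hsum : ∑ i, 2 * r i ≤ 1) :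
    LineCondition (⋃ i, ball (c i) (r i)) := by
  intro p v hv
  calc volume {t : ℝ | p + t • v ∈ ⋃ i, ball (c i) (r i)}
      ≤ ∑ i, volume {t : ℝ | p + t • v ∈ ball (c i) (r i)} := by
        simpa only [mem_iUnion, ofPred_exists] using measure_iUnion_fintype_le volume _
    _ ≤ ∑ i, ENNReal.ofReal (2 * r i) :=
        Finset.sum_le_sum fun i _ => volume_preimage_line_ball_le hv _ _
    _ ≤ 1 := by
        rwa [← ENNReal.ofReal_sum_of_nonneg fun i _ => by linarith [hr i], ENNReal.ofReal_le_one]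

lemma one_le_abs_natCast_sub {i j : ℕ} (hij : i ≠ j) : 1 ≤ |(i : ℝ) - j| := by
  exact_mod_cast Int.one_le_abs (sub_ne_zero.2 (Int.ofNat_inj.not.2 hij))

lemma one_le_dist_natCast_smul {E : Type*} [NormedAddCommGroup E] [NormedSpace ℝ E] {e : E}
    (he : ‖e‖ = 1) {i j : ℕ} (hij : i ≠ j) : 1 ≤ dist ((i : ℝ) • e) ((j : ℝ) • e) := by
  rw [dist_eq_norm, ← sub_smul, norm_smul, he, mul_one, Real.norm_eq_abs]
  exact one_le_abs_natCast_sub hij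

lemma volume_ball_le_lCirc {n d : ℕ} (hn : n ≠ 0) (hd : d ≠ 0) {r : ℝ} (hr0 : 0 < r)
    (hr : r < 1 / 2) : volume (ball (0 : EuclideanSpace ℝ (Fin d)) r) ≤ lCirc d n := by
  have : NeZero n := ⟨hn⟩
  have : NeZero d := ⟨hd⟩
  set s := (1 / 2 - r) / n
  have hs0 : 0 < s := div_pos (by linarith) (by positivity)
  have hs : s ≤ 1 / 2 - r :=
    div_le_self (by linarith) (by exact_mod_cast Nat.one_le_iff_ne_zero.2 hn)
  set e : EuclideanSpace ℝ (Fin d) := EuclideanSpace.single 0 1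
  have he : ‖e‖ = 1 := by simp [e]
  set c : Fin n → EuclideanSpace ℝ (Fin d) := fun i => ((i : ℕ) : ℝ) • e
  set ρ : Fin n → ℝ := fun i => if i = 0 then r else s
  have hρ0 : ∀ i, 0 < ρ i := fun i => by unfold ρ; split_ifs <;> assumption
  have hρ : ∀ i, ρ i ≤ (if i = 0 then r else 0) + s := fun i => by
    unfold ρ; split_ifs <;> linarith
  have hdisj : Pairwise fun i j => Disjoint (ball (c i) (ρ i)) (ball (c j) (ρ j)) := by
    intro i j hij
    refine ball_disjoint_ball ((add_le_add (hρ i) (hρ j)).trans ?_)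
    refine le_trans ?_ (one_le_dist_natCast_smul he (Fin.val_injective.ne hij))
    split_ifs <;> linarith
  have hsum : ∑ i, 2 * ρ i ≤ 1 := by
    calc ∑ i, 2 * ρ i ≤ ∑ i, 2 * ((if i = 0 then r else 0) + s) :=
          Finset.sum_le_sum fun i _ => by linarith [hρ i]
      _ = 1 := by
          rw [← Finset.mul_sum, Finset.sum_add_distrib, Finset.sum_ite_eq',
            if_pos (Finset.mem_univ _), Finset.sum_const, Finset.card_univ, Fintype.card_fin,
            nsmul_eq_mul, mul_div_cancel₀ _ (NeZero.ne _)]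
          ring
  have hP : IsBallUnion n (⋃ i, ball (c i) (ρ i)) := ⟨c, ρ, hρ0, hdisj, rfl⟩
  calc volume (ball (0 : EuclideanSpace ℝ (Fin d)) r) = volume (ball (c 0) (ρ 0)) := by simp [c, ρ]
    _ ≤ volume (⋃ i, ball (c i) (ρ i)) := measure_mono (subset_iUnion (fun i => ball (c i) (ρ i)) 0)
    _ ≤ lCirc d n := le_lCirc hP (lineCondition_of_sum_le c (fun i => (hρ0 i).le) hsum)

lemma volume_ball_half_le_lCirc {n d : ℕ} (hn : n ≠ 0) (hd : d ≠ 0) :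
    volume (ball (0 : EuclideanSpace ℝ (Fin d)) (1 / 2)) ≤ lCirc d n := by
  have := nontrivial_euclideanSpace hd
  set V := volume (ball (0 : EuclideanSpace ℝ (Fin d)) 1)
  have hball : ∀ r : ℝ, 0 ≤ r →
      volume (ball (0 : EuclideanSpace ℝ (Fin d)) r) = ENNReal.ofReal (r ^ d) * V := fun r hr => by
    rw [Measure.addHaar_ball _ _ hr, finrank_euclideanSpace_fin]
  have hlim : Tendsto (fun r : ℝ => ENNReal.ofReal (r ^ d) * V) (𝓝[<] (1 / 2))
      (𝓝 (ENNReal.ofReal ((1 / 2) ^ d) * V)) :=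
    ENNReal.Tendsto.mul_const
      (ENNReal.tendsto_ofReal (((continuous_pow d).tendsto _).mono_left nhdsWithin_le_nhds))
      (Or.inr measure_ball_lt_top.ne)
  rw [hball _ (by norm_num)]
  refine le_of_tendsto hlim (eventually_of_mem (Ioo_mem_nhdsLT one_half_pos) fun r hr => ?_)
  rw [← hball r hr.1.le]
  exact volume_ball_le_lCirc hn hd hr.1 hr.2

def ChordSeparated {ι E : Type*} [NormedAddCommGroup E] [NormedSpace ℝ E] (C : ι → E) : Prop :=
  ∀ i j k, j ≠ i → j ≠ k → ∀ x ∈ segment ℝ (C i) (C k), 1 ≤ dist (C j) x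

lemma mem_segment_or_mem_segment_or_mem_segment (a b c : ℝ) :
    b ∈ segment ℝ a c ∨ a ∈ segment ℝ b c ∨ c ∈ segment ℝ a b := by
  simp only [segment_eq_uIcc, mem_uIcc]
  rcases le_total a b with h₁ | h₁ <;> rcases le_total b c with h₂ | h₂ <;>
    rcases le_total a c with h₃ | h₃ <;> simp [*]

section ChordSeparated

variable {E : Type*} [NormedAddCommGroup E] [InnerProductSpace ℝ E] {ι : Type*} {C : ι → E}

lemma ChordSeparated.not_line_meets_three (hC : ChordSeparated C) {ρ : ℝ} (hρ : ρ ≤ 1 / 2)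
    {p v : E} {i j k : ι} (hji : j ≠ i) (hjk : j ≠ k) {ti tj tk : ℝ}
    (hi : p + ti • v ∈ ball (C i) ρ) (hj : p + tj • v ∈ ball (C j) ρ)
    (hk : p + tk • v ∈ ball (C k) ρ) (htj : tj ∈ segment ℝ ti tk) : False := by
  obtain ⟨a, b, ha, hb, hab, rfl⟩ := htj
  simp only [smul_eq_mul] at hj
  have hcombo : dist (p + (a * ti + b * tk) • v) (a • C i + b • C k) < ρ := by
    have hmem : a • (p + ti • v - C i) + b • (p + tk • v - C k) ∈ ball (0 : E) ρ :=
      convex_ball 0 ρ (mem_ball_zero_iff.2 (by rwa [← dist_eq_norm]))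
        (mem_ball_zero_iff.2 (by rwa [← dist_eq_norm])) ha hb hab
    have hdiff : p + (a * ti + b * tk) • v - (a • C i + b • C k) =
        a • (p + ti • v - C i) + b • (p + tk • v - C k) := by
      linear_combination (norm := module) -hab • p
    rwa [dist_eq_norm, hdiff, ← mem_ball_zero_iff]
  have := hC i j k hji hjk _ ⟨a, b, ha, hb, hab, rfl⟩
  linarith [dist_triangle (C j) (p + (a * ti + b * tk) • v) (a • C i + b • C k),
    dist_comm (C j) (p + (a * ti + b * tk) • v), mem_ball.1 hj]

lemma ChordSeparated.lineCondition [Fintype ι] {d : ℕ} {C : ι → EuclideanSpace ℝ (Fin d)}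
    (hC : ChordSeparated C) {ρ : ℝ} (hρ : ρ ≤ 1 / 4) :
    LineCondition (⋃ i, ball (C i) ρ) := by
  classical
  intro p v hv
  set S : ι → Set ℝ := fun i => {t | p + t • v ∈ ball (C i) ρ}
  set H := Finset.univ.filter fun i => (S i).Nonempty
  have hH : H.card ≤ 2 := by
    by_contra! h
    obtain ⟨i, j, k, hi, hj, hk, hij, hik, hjk⟩ := Finset.two_lt_card_iff.1 h
    simp only [H, Finset.mem_filter, Finset.mem_univ, true_and] at hi hj hk
    obtain ⟨ti, hti⟩ := hi
    obtain ⟨tj, htj⟩ := hj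
    obtain ⟨tk, htk⟩ := hk
    have hρ' : ρ ≤ 1 / 2 := by linarith
    rcases mem_segment_or_mem_segment_or_mem_segment ti tj tk with h | h | h
    · exact hC.not_line_meets_three hρ' (Ne.symm hij) hjk hti htj htk h
    · exact hC.not_line_meets_three hρ' hij hik htj hti htk h
    · exact hC.not_line_meets_three hρ' (Ne.symm hik) (Ne.symm hjk) hti htk htj h
  have hsub : {t : ℝ | p + t • v ∈ ⋃ i, ball (C i) ρ} ⊆ ⋃ i ∈ H, S i := by
    intro t ht
    obtain ⟨i, hi⟩ := mem_iUnion.1 ht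
    exact mem_iUnion₂.2 ⟨i, Finset.mem_filter.2 ⟨Finset.mem_univ _, t, hi⟩, hi⟩
  calc volume {t : ℝ | p + t • v ∈ ⋃ i, ball (C i) ρ}
      ≤ ∑ i ∈ H, volume (S i) := (measure_mono hsub).trans (measure_biUnion_finset_le H S)
    _ ≤ ∑ _i ∈ H, ENNReal.ofReal (2 * ρ) :=
        Finset.sum_le_sum fun i _ => volume_preimage_line_ball_le hv _ _
    _ ≤ 2 * ENNReal.ofReal (2 * ρ) := by
        rw [Finset.sum_const, nsmul_eq_mul]
        gcongr
        exact_mod_cast hH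
    _ ≤ 1 := by
        rw [← ENNReal.ofReal_ofNat 2, ← ENNReal.ofReal_mul zero_le_two, ENNReal.ofReal_le_one]
        linarith

end ChordSeparated

section Polygon

variable {E : Type*} [NormedAddCommGroup E] [InnerProductSpace ℝ E]

lemma chordSeparated_of_inner_le {ι : Type*} {C : ι → E} {R : ℝ} (hR : 0 < R)
    (hnorm : ∀ i, ‖C i‖ = R) (hinner : ∀ i j, i ≠ j → ⟪C i, C j⟫ ≤ R ^ 2 - R) :
    ChordSeparated C := by
  rintro i j k hji hjk _ ⟨a, b, ha, hb, hab, rfl⟩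
  have hlow : R ≤ ⟪C j - (a • C i + b • C k), C j⟫ := by
    rw [inner_sub_left, inner_add_left, real_inner_smul_left, real_inner_smul_left,
      real_inner_self_eq_norm_sq, hnorm]
    nlinarith [mul_le_mul_of_nonneg_left (hinner i j (Ne.symm hji)) ha,
      mul_le_mul_of_nonneg_left (hinner k j (Ne.symm hjk)) hb]
  have hup : ⟪C j - (a • C i + b • C k), C j⟫ ≤ dist (C j) (a • C i + b • C k) * R := by
    rw [dist_eq_norm, ← hnorm j]
    exact real_inner_le_norm _ _
  exact le_of_mul_le_mul_right (by linarith) hR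

lemma inner_cos_smul_add_sin_smul {e₀ e₁ : E} (h₀ : ‖e₀‖ = 1) (h₁ : ‖e₁‖ = 1) (h₀₁ : ⟪e₀, e₁⟫ = 0)
    (α β : ℝ) :
    ⟪cos α • e₀ + sin α • e₁, cos β • e₀ + sin β • e₁⟫ = cos (α - β) := by
  simp only [inner_add_left, inner_add_right, real_inner_smul_left, real_inner_smul_right,
    real_inner_self_eq_norm_sq, h₀, h₁, h₀₁, real_inner_comm e₀ e₁, cos_sub]
  ring

end Polygon

lemma cos_le_cos_of_le_abs_of_abs_le {θ x : ℝ} (hθ : 0 ≤ θ) (h₁ : θ ≤ |x|) (h₂ : |x| ≤ 2 * π - θ) :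
    cos x ≤ cos θ := by
  rw [← cos_abs]
  rcases le_total |x| π with hx | hx
  · exact cos_le_cos_of_nonneg_of_le_pi hθ hx h₁
  · rw [← cos_two_pi_sub]
    exact cos_le_cos_of_nonneg_of_le_pi hθ (by linarith) (by linarith)

lemma exists_chordSeparated {d : ℕ} (hd : 2 ≤ d) (n : ℕ) :
    ∃ C : Fin n → EuclideanSpace ℝ (Fin d), ChordSeparated C := by
  rcases le_or_gt n 1 with hn | hn
  · exact ⟨0, fun i j k hji _ => absurd (Fin.subsingleton_iff_le_one.2 hn |>.elim j i) hji⟩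
  -- Vertices of a regular `n`-gon, with circumradius chosen so that `⟪C i, C j⟫ ≤ R ^ 2 - R`.
  set θ := 2 * π / n
  have hn' : (2 : ℝ) ≤ n := by exact_mod_cast hn
  have hθ0 : 0 < θ := by positivity
  have hθπ : θ ≤ π := by
    rw [div_le_iff₀ (by linarith)]
    nlinarith [pi_pos]
  have hcos : cos θ < 1 := by
    simpa using cos_lt_cos_of_nonneg_of_le_pi le_rfl hθπ hθ0
  set R := 1 / (1 - cos θ)
  have hR : 0 < R := one_div_pos.2 (by linarith)
  have hRcos : R ^ 2 * cos θ = R ^ 2 - R := by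
    have : R * (1 - cos θ) = 1 := one_div_mul_cancel (by linarith)
    linear_combination (-R) * this
  set e₀ : EuclideanSpace ℝ (Fin d) := EuclideanSpace.single ⟨0, by omega⟩ 1
  set e₁ : EuclideanSpace ℝ (Fin d) := EuclideanSpace.single ⟨1, by omega⟩ 1
  have h₀ : ‖e₀‖ = 1 := by simp [e₀]
  have h₁ : ‖e₁‖ = 1 := by simp [e₁]
  have h₀₁ : ⟪e₀, e₁⟫ = 0 := by simp [e₀, e₁, EuclideanSpace.inner_single_left]
  set C : Fin n → EuclideanSpace ℝ (Fin d) :=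
    fun i => R • (cos (θ * i) • e₀ + sin (θ * i) • e₁)
  have hinner : ∀ i j, ⟪C i, C j⟫ = R ^ 2 * cos (θ * i - θ * j) := fun i j => by
    simp only [C, real_inner_smul_left, real_inner_smul_right,
      inner_cos_smul_add_sin_smul h₀ h₁ h₀₁]
    ring
  refine ⟨C, chordSeparated_of_inner_le hR (fun i => ?_) fun i j hij => ?_⟩
  · rw [← sq_eq_sq₀ (norm_nonneg _) hR.le, ← real_inner_self_eq_norm_sq, hinner, sub_self,
      cos_zero, mul_one]
  · rw [hinner, ← hRcos]
    gcongr
    have hij' := one_le_abs_natCast_sub (Fin.val_injective.ne hij)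
    have hlt : |(i : ℝ) - j| ≤ n - 1 := by
      have hi : ((i : ℕ) : ℝ) + 1 ≤ n := by exact_mod_cast i.is_lt
      have hj : ((j : ℕ) : ℝ) + 1 ≤ n := by exact_mod_cast j.is_lt
      rw [abs_sub_le_iff]
      constructor <;>
        linarith [Nat.cast_nonneg (α := ℝ) (i : ℕ), Nat.cast_nonneg (α := ℝ) (j : ℕ)]
    apply cos_le_cos_of_le_abs_of_abs_le hθ0.le
    · rw [← mul_sub, abs_mul, abs_of_pos hθ0]
      nlinarith
    · rw [← mul_sub, abs_mul, abs_of_pos hθ0]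
      have hθn : θ * n = 2 * π := div_mul_cancel₀ _ (by linarith)
      nlinarith

lemma natCast_mul_volume_ball_le_lCirc {n d : ℕ} (hd : 2 ≤ d) :
    (n : ENNReal) * volume (ball (0 : EuclideanSpace ℝ (Fin d)) (1 / 4)) ≤ lCirc d n := by
  obtain ⟨C, hC⟩ := exists_chordSeparated hd n
  have hdisj : Pairwise fun i j => Disjoint (ball (C i) (1 / 4)) (ball (C j) (1 / 4)) :=
    fun i j hij => ball_disjoint_ball <| by
      have := hC i j i (Ne.symm hij) (Ne.symm hij) (C i) (left_mem_segment ℝ _ _)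
      rw [dist_comm] at this
      linarith
  have hP : IsBallUnion n (⋃ i, ball (C i) (1 / 4)) :=
    ⟨C, fun _ => 1 / 4, fun _ => by norm_num, hdisj, rfl⟩
  calc (n : ENNReal) * volume (ball (0 : EuclideanSpace ℝ (Fin d)) (1 / 4))
      = volume (⋃ i, ball (C i) (1 / 4)) := by
        rw [measure_iUnion hdisj fun _ => measurableSet_ball, tsum_fintype]
        simp [Measure.addHaar_ball_center]
    _ ≤ lCirc d n := le_lCirc hP (hC.lineCondition le_rfl)

lemma volume_ball_half_eq {d : ℕ} (hd : d ≠ 0) :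
    volume (ball (0 : EuclideanSpace ℝ (Fin d)) (1 / 2)) =
      ENNReal.ofReal (2 ^ d) * volume (ball (0 : EuclideanSpace ℝ (Fin d)) (1 / 4)) := by
  have := nontrivial_euclideanSpace hd
  have h := Measure.addHaar_ball_mul (volume : Measure (EuclideanSpace ℝ (Fin d))) 0 zero_le_two
    (1 / 4)
  rwa [finrank_euclideanSpace_fin, show (2 : ℝ) * (1 / 4) = 1 / 2 by norm_num] at h

theorem lCirc_eq (n d : ℕ) (hn : 1 ≤ n) (hd : 2 ≤ d) :
    lCirc d n = ENNReal.ofReal (max 1 ((n : ℝ) / 2 ^ d)) *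
      volume (ball (0 : EuclideanSpace ℝ (Fin d)) (1/2)) := by
  refine le_antisymm (sSup_le ?_) ?_
  · rintro _ ⟨P, hP, hline, rfl⟩
    exact volume_le_of_isBallUnion (by omega) hP hline
  rcases le_total ((n : ℝ) / 2 ^ d) 1 with hsmall | hlarge
  · rw [max_eq_left hsmall, ENNReal.ofReal_one, one_mul]
    exact volume_ball_half_le_lCirc (by omega) (by omega)
  · rw [max_eq_right hlarge, volume_ball_half_eq (by omega), ← mul_assoc,
      ← ENNReal.ofReal_mul (by positivity), div_mul_cancel₀ _ (by positivity),
      ENNReal.ofReal_natCast]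
    exact natCast_mul_volume_ball_le_lCirc hd
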